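/- Let w : 𝕋 → ℂ be C¹, m = m(w), and u = e^{iJ(w)} w with (d/dx)J(w) = |w|² − m. Then E(u) − 𝓝(w) = ∫₀^{2π}|w_x|² dx, where E(u) = ∫|u_x|² + (3/2)Im∫ u²\bar{u}\bar{u_x} + (1/2)∫|u|⁶ and 𝓝(w) = −(1/2)Im∫ w²\bar{w}\bar{w_x} + 2m Im∫ w\bar{w_x} − (m/2)∫|w|⁴ + 2π m³. -/

import Mathlib

/-!
Since `u_x = e^{iJ}(w_x + i(|w|² - m)w)` and `|e^{iJ}| = 1`, the energy density of `u` at each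
point equals that of `w` with `w_x` replaced by `w_x + i(|w|² - m)w`. Expanding the latter gives,
pointwise, `|w_x|²` plus the integrand of `𝓝(w)` plus `m²|w|²`, and the last term integrates to
`2π m³` by the definition of the mass.
-/

open MeasureTheory

/-- The mass `m(w) = (1/2π) ∫₀^{2π} |w|² dx`. -/
noncomputable def mass (w : ℝ → ℂ) : ℝ :=
  (1 / (2 * Real.pi)) * ∫ y in (0:ℝ)..(2 * Real.pi), ‖w y‖ ^ 2

open Complex ComplexConjugate

noncomputable def energyDensity (u u' : ℂ) : ℝ :=
  ‖u'‖ ^ 2 + 3 / 2 * (u ^ 2 * conj u * conj u').im + 1 / 2 * ‖u‖ ^ 6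

noncomputable def gaugedEnergyDensity (m : ℝ) (w w' : ℂ) : ℝ :=
  ‖w'‖ ^ 2 - 1 / 2 * (w ^ 2 * conj w * conj w').im + 2 * m * (w * conj w').im
    - m / 2 * ‖w‖ ^ 4 + m ^ 2 * ‖w‖ ^ 2

lemma energyDensity_mul_of_norm_eq_one {c : ℂ} (hc : ‖c‖ = 1) (u u' : ℂ) :
    energyDensity (c * u) (c * u') = energyDensity u u' := by
  have hcc : c * conj c = 1 := by
    rw [mul_conj, ← Complex.sq_norm, hc]; norm_num
  have hcubic : (c * u) ^ 2 * conj (c * u) * conj (c * u')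
      = (c * conj c) ^ 2 * (u ^ 2 * conj u * conj u') := by
    simp only [map_mul]; ring
  simp only [energyDensity, hcubic, hcc, norm_mul, hc, one_pow, one_mul]

lemma energyDensity_gauge (m : ℝ) (w w' : ℂ) :
    energyDensity w (I * ((‖w‖ ^ 2 - m : ℝ) : ℂ) * w + w') = gaugedEnergyDensity m w w' := by
  have hnorm : ∀ z : ℂ, ‖z‖ ^ 2 = z.re ^ 2 + z.im ^ 2 := fun z => by
    rw [Complex.sq_norm, normSq_apply]; ring
  have h4 : ‖w‖ ^ 4 = (‖w‖ ^ 2) ^ 2 := by ring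
  have h6 : ‖w‖ ^ 6 = (‖w‖ ^ 2) ^ 3 := by ring
  rw [energyDensity, gaugedEnergyDensity, h4, h6, hnorm w, hnorm w', hnorm]
  simp only [add_re, add_im, mul_re, mul_im, I_re, I_im, ofReal_re, ofReal_im,
    conj_re, conj_im, pow_two]
  ring

lemma hasDerivAt_exp_mul_I_mul {J : ℝ → ℝ} {J' : ℝ} {w : ℝ → ℂ} {w' : ℂ} {x : ℝ}
    (hJ : HasDerivAt J J' x) (hw : HasDerivAt w w' x) :
    HasDerivAt (fun y => exp (I * J y) * w y)
      (exp (I * J x) * (I * J' * w x + w')) x :=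
  ((hJ.ofReal_comp.const_mul I).cexp.mul hw).congr_deriv (by ring)

section Integrals

variable {a b : ℝ} {f f' : ℝ → ℂ}

lemma integral_energyDensity (hf : Continuous f) (hf' : Continuous f') :
    ∫ x in a..b, energyDensity (f x) (f' x)
      = (∫ x in a..b, ‖f' x‖ ^ 2)
        + 3 / 2 * (∫ x in a..b, (f x ^ 2 * conj (f x) * conj (f' x)).im)
        + 1 / 2 * (∫ x in a..b, ‖f x‖ ^ 6) := by
  unfold energyDensity
  rw [intervalIntegral.integral_add, intervalIntegral.integral_add,
    intervalIntegral.integral_const_mul, intervalIntegral.integral_const_mul]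
  all_goals exact Continuous.intervalIntegrable (by fun_prop) _ _

lemma integral_gaugedEnergyDensity (m : ℝ) (hf : Continuous f) (hf' : Continuous f') :
    ∫ x in a..b, gaugedEnergyDensity m (f x) (f' x)
      = (∫ x in a..b, ‖f' x‖ ^ 2)
        - 1 / 2 * (∫ x in a..b, (f x ^ 2 * conj (f x) * conj (f' x)).im)
        + 2 * m * (∫ x in a..b, (f x * conj (f' x)).im)
        - m / 2 * (∫ x in a..b, ‖f x‖ ^ 4)
        + m ^ 2 * (∫ x in a..b, ‖f x‖ ^ 2) := by
  unfold gaugedEnergyDensity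
  rw [intervalIntegral.integral_add, intervalIntegral.integral_sub,
    intervalIntegral.integral_add, intervalIntegral.integral_sub,
    intervalIntegral.integral_const_mul, intervalIntegral.integral_const_mul,
    intervalIntegral.integral_const_mul, intervalIntegral.integral_const_mul]
  all_goals exact Continuous.intervalIntegrable (by fun_prop) _ _

end Integrals

lemma integral_norm_sq_eq_mass (w : ℝ → ℂ) :
    ∫ x in (0:ℝ)..(2 * Real.pi), ‖w x‖ ^ 2 = 2 * Real.pi * mass w := by
  rw [mass]
  field_simp

theorem stmt11_general (w w' : ℝ → ℂ) (hw : ∀ x, HasDerivAt w (w' x) x)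
    (hw' : Continuous w')
    (m : ℝ) (hm : m = mass w)
    (J : ℝ → ℝ) (hJ : ∀ x, HasDerivAt J (‖w x‖ ^ 2 - m) x)
    (u : ℝ → ℂ) (hu : ∀ x, u x = Complex.exp (Complex.I * (J x : ℂ)) * w x)
    (E 𝓝 : ℝ)
    (hE : E = (∫ x in (0:ℝ)..(2 * Real.pi), ‖deriv u x‖ ^ 2)
      + (3 / 2) * (∫ x in (0:ℝ)..(2 * Real.pi),
          ((u x) ^ 2 * (starRingEnd ℂ) (u x) * (starRingEnd ℂ) (deriv u x)).im)
      + (1 / 2) * (∫ x in (0:ℝ)..(2 * Real.pi), ‖u x‖ ^ 6))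
    (hN : 𝓝 = - (1 / 2) * (∫ x in (0:ℝ)..(2 * Real.pi),
          ((w x) ^ 2 * (starRingEnd ℂ) (w x) * (starRingEnd ℂ) (w' x)).im)
      + 2 * m * (∫ x in (0:ℝ)..(2 * Real.pi), (w x * (starRingEnd ℂ) (w' x)).im)
      - (m / 2) * (∫ x in (0:ℝ)..(2 * Real.pi), ‖w x‖ ^ 4)
      + 2 * Real.pi * m ^ 3) :
    E - 𝓝 = ∫ x in (0:ℝ)..(2 * Real.pi), ‖w' x‖ ^ 2 := by
  set v : ℝ → ℂ := fun x => I * ((‖w x‖ ^ 2 - m : ℝ) : ℂ) * w x + w' x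
  have hwc : Continuous w := continuous_iff_continuousAt.2 fun x => (hw x).continuousAt
  have hJc : Continuous J := continuous_iff_continuousAt.2 fun x => (hJ x).continuousAt
  have hu_eq : u = fun x => exp (I * J x) * w x := funext hu
  have hu_deriv : ∀ x, deriv u x = exp (I * J x) * v x := fun x => by
    rw [hu_eq]; exact (hasDerivAt_exp_mul_I_mul (hJ x) (hw x)).deriv
  have hphase : ∀ x, ‖exp (I * J x)‖ = 1 := fun x => by
    rw [norm_exp, mul_comm, re_ofReal_mul, I_re, mul_zero, Real.exp_zero]
  have hE' : E = ∫ x in (0:ℝ)..(2 * Real.pi), gaugedEnergyDensity m (w x) (w' x) := by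
    rw [hE, ← integral_energyDensity (hu_eq ▸ by fun_prop) (funext hu_deriv ▸ by fun_prop)]
    refine intervalIntegral.integral_congr fun x _ => ?_
    rw [hu_deriv, hu, energyDensity_mul_of_norm_eq_one (hphase x), energyDensity_gauge]
  rw [hE', integral_gaugedEnergyDensity m hwc hw', integral_norm_sq_eq_mass w, ← hm, hN]
  ring

/-- With `E(u)` the DNLS energy of `u = e^{iJ(w)} w` and `𝓝(w)` the non-quadratic part of
the gauged energy, `E(u) − 𝓝(w) = ∫₀^{2π} |w_x|² dx`. -/
theorem stmt11 (w w' : ℝ → ℂ) (hw : ∀ x, HasDerivAt w (w' x) x)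
    (hw' : Continuous w') (hper : Function.Periodic w (2 * Real.pi))
    (m : ℝ) (hm : m = mass w)
    (J : ℝ → ℝ) (hJ : ∀ x, HasDerivAt J (‖w x‖ ^ 2 - m) x)
    (u : ℝ → ℂ) (hu : ∀ x, u x = Complex.exp (Complex.I * (J x : ℂ)) * w x)
    (E 𝓝 : ℝ)
    (hE : E = (∫ x in (0:ℝ)..(2 * Real.pi), ‖deriv u x‖ ^ 2)
      + (3 / 2) * (∫ x in (0:ℝ)..(2 * Real.pi),
          ((u x) ^ 2 * (starRingEnd ℂ) (u x) * (starRingEnd ℂ) (deriv u x)).im)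
      + (1 / 2) * (∫ x in (0:ℝ)..(2 * Real.pi), ‖u x‖ ^ 6))
    (hN : 𝓝 = - (1 / 2) * (∫ x in (0:ℝ)..(2 * Real.pi),
          ((w x) ^ 2 * (starRingEnd ℂ) (w x) * (starRingEnd ℂ) (w' x)).im)
      + 2 * m * (∫ x in (0:ℝ)..(2 * Real.pi), (w x * (starRingEnd ℂ) (w' x)).im)
      - (m / 2) * (∫ x in (0:ℝ)..(2 * Real.pi), ‖w x‖ ^ 4)
      + 2 * Real.pi * m ^ 3) :
    E - 𝓝 = ∫ x in (0:ℝ)..(2 * Real.pi), ‖w' x‖ ^ 2 :=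
  stmt11_general w w' hw hw' m hm J hJ u hu E 𝓝 hE hN
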